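/- Let f ∈ S^p with 1 ≤ p < ∞, let φ ∈ Φ be a continuous bounded nonnegative even function with φ(0)=0 and vanishing only on a null set, let τ > 0, n ∈ ℕ, and let v be a bounded nondecreasing function on [0,τ] that is not constant. Then E_n^p(f)_p · I_{n,φ,p}(τ,v) ≤ ∫_0^τ ω_φ^p(f, u/n)_p dv(u), where I_{n,φ,p}(τ,v) = inf_{k≥n} ∫_0^τ φ^p(ku/n) dv(u), E_n(f)_p = (Σ_{|k|≥n}|f̂(k)|^p)^{1/p}, and ω_φ(f,δ)_p = sup_{|h|≤δ} (Σ_{k∈ℤ} φ^p(kh)|f̂(k)|^p)^{1/p}. -/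

import Mathlib

open MeasureTheory

/-- `φ ∈ Φ`: continuous, bounded, nonnegative, even, `φ(0)=0`, vanishing only on a null set. -/
def MemPhi (φ : ℝ → ℝ) : Prop :=
  Continuous φ ∧ (∃ C : ℝ, ∀ t, φ t ≤ C) ∧ (∀ t, 0 ≤ φ t) ∧ (∀ t, φ (-t) = φ t) ∧
    φ 0 = 0 ∧ volume {t : ℝ | φ t = 0} = 0

/-- Generalized modulus of smoothness `ω_φ(f, δ)_p` of a function of `S^p` given through
its sequence of Fourier coefficients `a`. -/
noncomputable def spMod (p : ℝ) (φ : ℝ → ℝ) (a : ℤ → ℂ) (δ : ℝ) : ℝ :=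
  sSup {s : ℝ | ∃ h : ℝ, |h| ≤ δ ∧
    s = (∑' k : ℤ, φ ((k : ℝ) * h) ^ p * ‖a k‖ ^ p) ^ (1 / p)}

/-
For every `k` with `|k| ≥ n`, the infimum `I` is at most `∫ φ^p(|k| u / n) dv = ∫ φ^p(k u / n) dv`
by evenness of `φ`, so `E_n^p · I ≤ ∑_{|k| ≥ n} |a_k|^p ∫ φ^p(k u / n) dv(u)`. The integrands are
bounded and the measure of `(0, τ]` is finite, so sum and integral commute; the resulting integrand
is a partial sum of the series `∑_k φ^p(k u / n) |a_k|^p ≤ ω_φ^p(f, u / n)_p`.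
-/

open Set

section Modulus

variable {p : ℝ} {φ : ℝ → ℝ} {a : ℤ → ℂ}

lemma rpow_mul_rpow_norm_nonneg (hφ0 : ∀ t, 0 ≤ φ t) (x : ℝ) (z : ℂ) : 0 ≤ φ x ^ p * ‖z‖ ^ p :=
  mul_nonneg (Real.rpow_nonneg (hφ0 x) p) (Real.rpow_nonneg (norm_nonneg z) p)

lemma summable_rpow_mul_rpow_norm {C : ℝ} (hp : 0 ≤ p) (hφ0 : ∀ t, 0 ≤ φ t) (hφC : ∀ t, φ t ≤ C)
    (ha : Summable fun k : ℤ => ‖a k‖ ^ p) (h : ℝ) :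
    Summable fun k : ℤ => φ (k * h) ^ p * ‖a k‖ ^ p :=
  (ha.mul_left (C ^ p)).of_nonneg_of_le (fun _ => rpow_mul_rpow_norm_nonneg hφ0 _ _) fun k =>
    mul_le_mul_of_nonneg_right (Real.rpow_le_rpow (hφ0 _) (hφC _) hp) (by positivity)

lemma bddAbove_spMod_set {C : ℝ} (hp : 0 ≤ p) (hφ0 : ∀ t, 0 ≤ φ t) (hφC : ∀ t, φ t ≤ C)
    (ha : Summable fun k : ℤ => ‖a k‖ ^ p) (δ : ℝ) :
    BddAbove {s : ℝ | ∃ h : ℝ, |h| ≤ δ ∧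
      s = (∑' k : ℤ, φ ((k : ℝ) * h) ^ p * ‖a k‖ ^ p) ^ (1 / p)} := by
  refine ⟨(C ^ p * ∑' k : ℤ, ‖a k‖ ^ p) ^ (1 / p), ?_⟩
  rintro s ⟨h, -, rfl⟩
  gcongr
  · exact tsum_nonneg fun _ => rpow_mul_rpow_norm_nonneg hφ0 _ _
  · rw [← tsum_mul_left]
    exact (summable_rpow_mul_rpow_norm hp hφ0 hφC ha h).tsum_le_tsum
      (fun k => mul_le_mul_of_nonneg_right (Real.rpow_le_rpow (hφ0 _) (hφC _) hp)
        (by positivity)) (ha.mul_left _)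

lemma spMod_nonneg (hφ0 : ∀ t, 0 ≤ φ t) (δ : ℝ) : 0 ≤ spMod p φ a δ :=
  Real.sSup_nonneg <| by
    rintro s ⟨h, -, rfl⟩
    exact Real.rpow_nonneg (tsum_nonneg fun _ => rpow_mul_rpow_norm_nonneg hφ0 _ _) _

lemma spMod_mono {C : ℝ} (hp : 0 ≤ p) (hφ0 : ∀ t, 0 ≤ φ t) (hφC : ∀ t, φ t ≤ C)
    (ha : Summable fun k : ℤ => ‖a k‖ ^ p) : Monotone (spMod p φ a) := fun _ _ hδ =>
  Real.sSup_le
    (fun _ ⟨h, hh, hs⟩ => le_csSup (bddAbove_spMod_set hp hφ0 hφC ha _) ⟨h, hh.trans hδ, hs⟩)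
    (spMod_nonneg hφ0 _)

lemma tsum_subtype_le_spMod_rpow {C : ℝ} (hp : 0 < p) (hφ0 : ∀ t, 0 ≤ φ t)
    (hφC : ∀ t, φ t ≤ C) (ha : Summable fun k : ℤ => ‖a k‖ ^ p) (P : ℤ → Prop) {δ : ℝ}
    (hδ : 0 ≤ δ) : ∑' k : {k : ℤ // P k}, φ (k * δ) ^ p * ‖a k‖ ^ p ≤ spMod p φ a δ ^ p := by
  have hsum := summable_rpow_mul_rpow_norm hp.le hφ0 hφC ha δ
  have hnonneg : ∀ k : ℤ, 0 ≤ φ (k * δ) ^ p * ‖a k‖ ^ p := fun _ =>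
    rpow_mul_rpow_norm_nonneg hφ0 _ _
  calc ∑' k : {k : ℤ // P k}, φ (k * δ) ^ p * ‖a k‖ ^ p
      ≤ ∑' k : ℤ, φ (k * δ) ^ p * ‖a k‖ ^ p := hsum.tsum_subtype_le _ {k | P k} hnonneg
    _ = ((∑' k : ℤ, φ (k * δ) ^ p * ‖a k‖ ^ p) ^ (1 / p)) ^ p := by
        rw [one_div, Real.rpow_inv_rpow (tsum_nonneg hnonneg) hp.ne']
    _ ≤ spMod p φ a δ ^ p := by
        refine Real.rpow_le_rpow (Real.rpow_nonneg (tsum_nonneg hnonneg) _) ?_ hp.le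
        exact le_csSup (bddAbove_spMod_set hp.le hφ0 hφC ha δ) ⟨δ, (abs_of_nonneg hδ).le, rfl⟩

lemma setIntegral_tsum_subtype_le_setIntegral_spMod_rpow {C : ℝ} (hp : 0 < p)
    (hφ0 : ∀ t, 0 ≤ φ t) (hφC : ∀ t, φ t ≤ C) (ha : Summable fun k : ℤ => ‖a k‖ ^ p)
    (P : ℤ → Prop) (n : ℕ) {μ : Measure ℝ} [IsLocallyFiniteMeasure μ] (τ : ℝ) :
    ∫ u in Ioc (0:ℝ) τ, ∑' k : {k : ℤ // P k}, φ (k * u / n) ^ p * ‖a k‖ ^ p ∂μ ≤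
      ∫ u in Ioc (0:ℝ) τ, spMod p φ a (u / n) ^ p ∂μ := by
  have hmono : Monotone fun u : ℝ => spMod p φ a (u / n) ^ p := fun u w huw =>
    Real.rpow_le_rpow (spMod_nonneg hφ0 _)
      (spMod_mono hp.le hφ0 hφC ha (div_le_div_of_nonneg_right huw n.cast_nonneg)) hp.le
  refine integral_mono_of_nonneg
    (.of_forall fun u => tsum_nonneg fun k => rpow_mul_rpow_norm_nonneg hφ0 _ _)
    ((hmono.locallyIntegrable.integrableOn_isCompact isCompact_Icc).mono_set
      Ioc_subset_Icc_self)
    ((ae_restrict_iff' measurableSet_Ioc).2 (.of_forall fun u hu => ?_))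
  simpa only [mul_div_assoc] using
    tsum_subtype_le_spMod_rpow hp hφ0 hφC ha P (div_nonneg hu.1.le n.cast_nonneg)

end Modulus

lemma hasSum_integral_mul_of_norm_le {α ι : Type*} [MeasurableSpace α] [Countable ι]
    {μ : Measure α} [IsFiniteMeasure μ] {g : ι → α → ℝ} {c : ι → ℝ} {C : ℝ}
    (hg : ∀ k, AEStronglyMeasurable (g k) μ) (hgC : ∀ k u, ‖g k u‖ ≤ C) (hc : Summable c) :
    HasSum (fun k => (∫ u, g k u ∂μ) * c k) (∫ u, ∑' k, g k u * c k ∂μ) := by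
  have hint : ∀ k, Integrable (g k) μ := fun k =>
    .of_bound (hg k) C (.of_forall (hgC k))
  have hbound : ∀ k, ∫ u, ‖g k u * c k‖ ∂μ ≤ μ.real univ * C * |c k| := fun k => by
    simp only [norm_mul, Real.norm_eq_abs, integral_mul_const]
    gcongr
    simpa using integral_mono (hint k).abs (integrable_const C) (hgC k)
  simp_rw [← integral_mul_const]
  exact hasSum_integral_of_summable_integral_norm (fun k => (hint k).mul_const _)
    ((hc.abs.mul_left _).of_nonneg_of_le (fun _ => integral_nonneg fun _ => norm_nonneg _) hbound)

lemma Function.Even.iInf_natCast_le {J : ℝ → ℝ} (hJ : Function.Even J) (hJ0 : ∀ x, 0 ≤ J x)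
    {n : ℕ} {k : ℤ} (hk : (n : ℤ) ≤ |k|) : ⨅ m : {m : ℕ // n ≤ m}, J m ≤ J k := by
  have hJabs : J |(k : ℝ)| = J k := by
    rcases abs_choice (k : ℝ) with h | h <;> rw [h]
    exact hJ _
  have hbdd : BddBelow (range fun m : {m : ℕ // n ≤ m} => J m) :=
    ⟨0, by rintro _ ⟨m, rfl⟩; exact hJ0 _⟩
  calc ⨅ m : {m : ℕ // n ≤ m}, J m ≤ J (k.natAbs : ℕ) :=
        ciInf_le hbdd ⟨k.natAbs, by rwa [Int.abs_eq_natAbs, Nat.cast_le] at hk⟩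
    _ = J k := by rw [Nat.cast_natAbs, Int.cast_abs, hJabs]

theorem sp_En_mul_I_le_integral_general (p : ℝ) (hp : 1 ≤ p) (a : ℤ → ℂ)
    (ha : Summable fun k : ℤ => ‖a k‖ ^ p)
    (φ : ℝ → ℝ) (hφ : MemPhi φ) (τ : ℝ) (n : ℕ)
    (v : StieltjesFunction ℝ) :
    (∑' k : {k : ℤ // (n : ℤ) ≤ |k|}, ‖a k.1‖ ^ p) *
        (⨅ k : {k : ℕ // n ≤ k}, ∫ u in Set.Ioc (0:ℝ) τ,
          φ ((k.1 : ℝ) * u / n) ^ p ∂v.measure) ≤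
      ∫ u in Set.Ioc (0:ℝ) τ, (spMod p φ a (u / n)) ^ p ∂v.measure := by
  obtain ⟨hφc, ⟨C, hφC⟩, hφ0, hφ_even, -, -⟩ := hφ
  have hp0 : 0 < p := by linarith
  have : IsFiniteMeasure (v.measure.restrict (Ioc 0 τ)) :=
    isFiniteMeasure_restrict.2 measure_Ioc_lt_top.ne
  set J : ℝ → ℝ := fun x => ∫ u in Ioc (0:ℝ) τ, φ (x * u / n) ^ p ∂v.measure
  have hJ_even : Function.Even J := fun x => by simp only [J, neg_mul, neg_div, hφ_even]
  have hJ_nonneg : ∀ x, 0 ≤ J x := fun x =>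
    integral_nonneg fun u => Real.rpow_nonneg (hφ0 _) p
  have hsum : HasSum (fun k : {k : ℤ // (n : ℤ) ≤ |k|} => J k * ‖a k‖ ^ p)
      (∫ u in Ioc (0:ℝ) τ, ∑' k : {k : ℤ // (n : ℤ) ≤ |k|},
        φ (k * u / n) ^ p * ‖a k‖ ^ p ∂v.measure) :=
    hasSum_integral_mul_of_norm_le (C := C ^ p)
      (fun k => ((hφc.comp (by fun_prop)).rpow_const fun _ => .inr hp0.le).aestronglyMeasurable)
      (fun k u => by
        rw [Real.norm_of_nonneg (Real.rpow_nonneg (hφ0 _) p)]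
        exact Real.rpow_le_rpow (hφ0 _) (hφC _) hp0.le)
      (ha.subtype _)
  calc (∑' k : {k : ℤ // (n : ℤ) ≤ |k|}, ‖a k.1‖ ^ p) * (⨅ m : {m : ℕ // n ≤ m}, J m)
      = ∑' k : {k : ℤ // (n : ℤ) ≤ |k|}, (⨅ m : {m : ℕ // n ≤ m}, J m) * ‖a k‖ ^ p := by
        rw [tsum_mul_left, mul_comm]
    _ ≤ ∑' k : {k : ℤ // (n : ℤ) ≤ |k|}, J k * ‖a k‖ ^ p :=
        ((ha.subtype _).mul_left _).tsum_le_tsum (fun k => mul_le_mul_of_nonneg_right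
          (hJ_even.iInf_natCast_le hJ_nonneg k.2) (Real.rpow_nonneg (norm_nonneg _) p))
          hsum.summable
    _ = _ := hsum.tsum_eq
    _ ≤ _ := setIntegral_tsum_subtype_le_setIntegral_spMod_rpow hp0 hφ0 hφC ha _ n τ

/-- `E_n^p(f)_p · I_{n,φ,p}(τ,v) ≤ ∫_0^τ ω_φ^p(f, u/n)_p dv(u)`. -/
theorem sp_En_mul_I_le_integral (p : ℝ) (hp : 1 ≤ p) (a : ℤ → ℂ)
    (ha : Summable fun k : ℤ => ‖a k‖ ^ p)
    (φ : ℝ → ℝ) (hφ : MemPhi φ) (τ : ℝ) (hτ : 0 < τ) (n : ℕ) (hn : 1 ≤ n)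
    (v : StieltjesFunction ℝ) (hv : v 0 < v τ) :
    (∑' k : {k : ℤ // (n : ℤ) ≤ |k|}, ‖a k.1‖ ^ p) *
        (⨅ k : {k : ℕ // n ≤ k}, ∫ u in Set.Ioc (0:ℝ) τ,
          φ ((k.1 : ℝ) * u / n) ^ p ∂v.measure) ≤
      ∫ u in Set.Ioc (0:ℝ) τ, (spMod p φ a (u / n)) ^ p ∂v.measure :=
  sp_En_mul_I_le_integral_general p hp a ha φ hφ τ n v
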